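/- For every κ > 0 and every x ∈ [0, 2π], the two-sided series ∑_{m ∈ ℤ} e^{imx}/(2π(m² + κ²)) converges, with sum equal to cosh(κ(π − x))/(2κ sinh(πκ)). -/

import Mathlib

/-!
On `[0, 2π]` the function `y ↦ cosh (κ (π - y))` is symmetric about `π`, so it agrees at the
endpoints and periodizes to a continuous function on `ℝ / 2πℤ`. An explicit primitive of
`e^{-iny} cosh (κ (π - y))` shows that its `n`-th Fourier coefficient is
`2κ sinh (πκ) / (2π (n² + κ²))`. These coefficients are summable, so the Fourier series
converges pointwise to the function itself.
-/

open Complex Set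
open scoped Real

theorem hasDerivAt_exp_mul_cosh_primitive (ν κ c : ℂ) (h : ν ^ 2 + κ ^ 2 ≠ 0) (z : ℂ) :
    HasDerivAt
      (fun z => exp (-I * ν * z) * (I * ν * cosh (κ * (c - z)) - κ * sinh (κ * (c - z))) /
        (ν ^ 2 + κ ^ 2))
      (exp (-I * ν * z) * cosh (κ * (c - z))) z := by
  have hexp : HasDerivAt (fun z => exp (-I * ν * z)) (-I * ν * exp (-I * ν * z)) z := by
    simpa [mul_comm] using ((hasDerivAt_id z).const_mul (-I * ν)).cexp
  have hlin : HasDerivAt (fun z => κ * (c - z)) (-κ) z := by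
    simpa using ((hasDerivAt_id z).const_sub c).const_mul κ
  refine ((hexp.mul ((hlin.ccosh.const_mul (I * ν)).sub (hlin.csinh.const_mul κ))).div_const
    (ν ^ 2 + κ ^ 2)).congr_deriv ?_
  rw [Pi.sub_apply, div_eq_iff h]
  linear_combination -(exp (-I * ν * z) * cosh (κ * (c - z)) * ν ^ 2) * I_sq

theorem integral_exp_mul_cosh (n : ℤ) (κ : ℂ) (h : (n : ℂ) ^ 2 + κ ^ 2 ≠ 0) :
    ∫ y in (0 : ℝ)..2 * π, exp (-I * n * y) * cosh (κ * (π - y)) =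
      2 * κ * sinh (π * κ) / (n ^ 2 + κ ^ 2) := by
  rw [intervalIntegral.integral_eq_sub_of_hasDerivAt
    (fun y _ => (hasDerivAt_exp_mul_cosh_primitive n κ π h y).comp_ofReal)
    (by apply Continuous.intervalIntegrable; fun_prop)]
  have hperiod : exp (-I * n * (2 * π : ℝ)) = 1 := by
    rw [show -I * n * (2 * π : ℝ) = (-n : ℤ) * (2 * π * I) by push_cast; ring]
    exact exp_int_mul_two_pi_mul_I (-n)
  have hend : κ * (π - (2 * π : ℝ)) = -(π * κ) := by push_cast; ring
  have hstart : κ * (π - (0 : ℝ)) = π * κ := by push_cast; ring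
  rw [hperiod, hend, hstart]
  simp only [ofReal_zero, mul_zero, Complex.exp_zero, Complex.cosh_neg, Complex.sinh_neg]
  ring

noncomputable def circleResolventKernel (κ y : ℝ) : ℝ :=
  Real.cosh (κ * (π - y)) / (2 * κ * Real.sinh (π * κ))

theorem circleResolventKernel_two_pi_sub (κ y : ℝ) :
    circleResolventKernel κ (2 * π - y) = circleResolventKernel κ y := by
  rw [circleResolventKernel, show κ * (π - (2 * π - y)) = -(κ * (π - y)) by ring,
    Real.cosh_neg, circleResolventKernel]

local instance : Fact (0 < 2 * π) := ⟨Real.two_pi_pos⟩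

noncomputable def periodizedCircleResolventKernel (κ : ℝ) : AddCircle (2 * π) → ℂ :=
  AddCircle.liftIco (2 * π) 0 fun y => (circleResolventKernel κ y : ℂ)

theorem periodizedCircleResolventKernel_coe_apply (κ : ℝ) {y : ℝ} (hy : y ∈ Icc 0 (2 * π)) :
    periodizedCircleResolventKernel κ y = circleResolventKernel κ y := by
  obtain hlt | rfl := hy.2.lt_or_eq
  · exact AddCircle.liftIco_zero_coe_apply ⟨hy.1, hlt⟩
  · rw [AddCircle.coe_period, ← AddCircle.coe_zero, periodizedCircleResolventKernel,
      AddCircle.liftIco_zero_coe_apply ⟨le_rfl, Real.two_pi_pos⟩,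
      ← circleResolventKernel_two_pi_sub, sub_zero]

theorem continuous_periodizedCircleResolventKernel (κ : ℝ) :
    Continuous (periodizedCircleResolventKernel κ) :=
  AddCircle.liftIco_zero_continuous
    (by simpa using congrArg ((↑) : ℝ → ℂ) (circleResolventKernel_two_pi_sub κ 0).symm)
    (by unfold circleResolventKernel; fun_prop)

theorem fourier_two_pi_coe_apply (n : ℤ) (x : ℝ) :
    fourier n (x : AddCircle (2 * π)) = exp (I * n * x) := by
  rw [fourier_coe_apply]
  congr 1
  push_cast
  field_simp

theorem fourierCoeff_periodizedCircleResolventKernel {κ : ℝ} (hκ : κ ≠ 0) (n : ℤ) :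
    fourierCoeff (periodizedCircleResolventKernel κ) n = 1 / (2 * π * (n ^ 2 + κ ^ 2)) := by
  have hd : (n : ℂ) ^ 2 + (κ : ℂ) ^ 2 ≠ 0 := by
    exact_mod_cast (by positivity : (n : ℝ) ^ 2 + κ ^ 2 ≠ 0)
  have hκ' : (κ : ℂ) ≠ 0 := by exact_mod_cast hκ
  have hsinh : Complex.sinh (π * κ) ≠ 0 := by
    exact_mod_cast Real.sinh_ne_zero.2 (mul_ne_zero Real.pi_ne_zero hκ)
  have hintegrand : EqOn
      (fun y : ℝ =>
        fourier (-n) (y : AddCircle (2 * π)) • periodizedCircleResolventKernel κ y)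
      (fun y : ℝ =>
        (2 * κ * Complex.sinh (π * κ))⁻¹ * (exp (-I * n * y) * cosh (κ * (π - y))))
      (uIcc 0 (2 * π)) := by
    intro y hy
    rw [uIcc_of_le Real.two_pi_pos.le] at hy
    simp only [periodizedCircleResolventKernel_coe_apply κ hy, fourier_two_pi_coe_apply,
      smul_eq_mul, circleResolventKernel, Int.cast_neg, mul_neg, neg_mul]
    push_cast
    ring
  rw [fourierCoeff_eq_intervalIntegral _ _ 0, zero_add,
    intervalIntegral.integral_congr hintegrand, intervalIntegral.integral_const_mul,
    integral_exp_mul_cosh n κ hd, Complex.real_smul]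
  push_cast
  field_simp

theorem summable_one_div_int_sq_add_sq (κ : ℝ) :
    Summable fun n : ℤ => 1 / ((n : ℝ) ^ 2 + κ ^ 2) := by
  refine (Real.summable_one_div_int_pow.2 one_lt_two).of_norm_bounded_eventually ?_
  filter_upwards [Filter.eventually_cofinite_ne 0] with n hn
  have hn : (n : ℝ) ≠ 0 := by exact_mod_cast hn
  rw [Real.norm_of_nonneg (by positivity)]
  exact one_div_le_one_div_of_le (by positivity) (le_add_of_nonneg_right (sq_nonneg κ))

theorem summable_fourierCoeff_periodizedCircleResolventKernel {κ : ℝ} (hκ : κ ≠ 0) :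
    Summable (fourierCoeff (periodizedCircleResolventKernel κ)) := by
  have hreal := (summable_one_div_int_sq_add_sq κ).mul_left (1 / (2 * π))
  refine (Complex.ofRealCLM.summable hreal).congr fun n => ?_
  rw [fourierCoeff_periodizedCircleResolventKernel hκ, Complex.ofRealCLM_apply,
    one_div_mul_one_div]
  push_cast
  rfl

theorem circle_resolvent_kernel_hasSum (κ : ℝ) (hκ : 0 < κ) (x : ℝ)
    (hx : x ∈ Set.Icc (0 : ℝ) (2 * Real.pi)) :
    HasSum
      (fun m : ℤ =>
        Complex.exp (Complex.I * (m : ℂ) * (x : ℂ)) /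
          (2 * (Real.pi : ℂ) * ((m : ℂ) ^ 2 + (κ : ℂ) ^ 2)))
      ((Real.cosh (κ * (Real.pi - x)) / (2 * κ * Real.sinh (Real.pi * κ)) : ℝ) : ℂ) := by
  have hK : HasSum (fun m => fourierCoeff (periodizedCircleResolventKernel κ) m •
      fourier m (x : AddCircle (2 * π))) (periodizedCircleResolventKernel κ x) :=
    has_pointwise_sum_fourier_series_of_summable
      (f := ⟨_, continuous_periodizedCircleResolventKernel κ⟩)
      (summable_fourierCoeff_periodizedCircleResolventKernel hκ.ne') x
  rw [periodizedCircleResolventKernel_coe_apply κ hx, circleResolventKernel] at hK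
  convert hK using 2 with m
  rw [fourierCoeff_periodizedCircleResolventKernel hκ.ne', fourier_two_pi_coe_apply, smul_eq_mul,
    one_div_mul_eq_div]
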